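/- arXiv:1805.07657 — 3 statements merged into one kernel-verified Lean document; each statement's English description precedes it below -/
import Mathlib

section
/- Let A - λB be a singular square matrix pencil, let α ∈ ℂ satisfy rank(A - αB) = nrank(A,B), and suppose x ∈ ℂⁿ can be written as x = q₁ + α q₂ + ⋯ + α^p q_{p+1} where the vectors satisfy the chain relations A q₁ = 0, A q₂ = B q₁, …, A q_{p+1} = B q_p, B q_{p+1} = 0, and y ∈ ℂⁿ can be written as y = w₁ + ᾱ w₂ + ⋯ + ᾱ^r w_{r+1} where A* w₁ = 0, A* w₂ = B* w₁, …, A* w_{r+1} = B* w_r, B* w_{r+1} = 0. Then y* B x = 0 and y* A x = 0. -/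
open Matrix

lemma stmt4_adj {n : ℕ} (M : Matrix (Fin n) (Fin n) ℂ) (v u : Fin n → ℂ) :
    star (Mᴴ *ᵥ v) ⬝ᵥ u = star v ⬝ᵥ (M *ᵥ u) := by
  rw [star_mulVec, conjTranspose_conjTranspose, ← dotProduct_mulVec]

lemma stmt4_sum_dotProduct {n m : ℕ} (f : Fin m → Fin n → ℂ) (v : Fin n → ℂ) :
    (∑ i, f i) ⬝ᵥ v = ∑ i, f i ⬝ᵥ v := by
  simp only [dotProduct, Finset.sum_apply, Finset.sum_mul]
  exact Finset.sum_comm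

/-- Lemma 5.2: for chains coming from singular blocks, at a point α of full normal
rank, y*Bx = 0 and y*Ax = 0. -/
theorem stmt4 {n p r : ℕ} (A B : Matrix (Fin n) (Fin n) ℂ) (α : ℂ)
    (hsing : ∀ lam : ℂ, (A - lam • B).det = 0)
    (hα : (A - α • B).rank = ⨆ z : ℂ, (A - z • B).rank)
    (q : Fin (p + 1) → Fin n → ℂ) (w : Fin (r + 1) → Fin n → ℂ)
    (hq0 : A *ᵥ q 0 = 0)
    (hqc : ∀ j : Fin p, A *ᵥ q j.succ = B *ᵥ q j.castSucc)
    (hqlast : B *ᵥ q (Fin.last p) = 0)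
    (hw0 : Aᴴ *ᵥ w 0 = 0)
    (hwc : ∀ i : Fin r, Aᴴ *ᵥ w i.succ = Bᴴ *ᵥ w i.castSucc)
    (hwlast : Bᴴ *ᵥ w (Fin.last r) = 0)
    (x y : Fin n → ℂ)
    (hx : x = ∑ j : Fin (p + 1), α ^ (j : ℕ) • q j)
    (hy : y = ∑ i : Fin (r + 1), (starRingEnd ℂ α) ^ (i : ℕ) • w i) :
    star y ⬝ᵥ (B *ᵥ x) = 0 ∧ star y ⬝ᵥ (A *ᵥ x) = 0 := by
  have keyB : ∀ j : Fin (p + 1), ∀ i : Fin (r + 1), star (w i) ⬝ᵥ (B *ᵥ q j) = 0 := by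
    intro j
    induction j using Fin.induction with
    | zero =>
      intro i
      induction i using Fin.lastCases with
      | last => rw [← stmt4_adj B, hwlast]; simp
      | cast i' => rw [← stmt4_adj B, ← hwc i', stmt4_adj A, hq0]; simp
    | succ j ih =>
      intro i
      induction i using Fin.lastCases with
      | last => rw [← stmt4_adj B, hwlast]; simp
      | cast i' =>
        rw [← stmt4_adj B, ← hwc i', stmt4_adj A, hqc j]
        exact ih i'.succ
  have keyA : ∀ j : Fin (p + 1), ∀ i : Fin (r + 1), star (w i) ⬝ᵥ (A *ᵥ q j) = 0 := by
    intro j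
    induction j using Fin.induction with
    | zero => intro i; rw [hq0]; simp
    | succ j ih => intro i; rw [hqc j]; exact keyB j.castSucc i
  have hsy : star y = ∑ i : Fin (r + 1), α ^ (i : ℕ) • star (w i) := by
    rw [hy]
    simp only [star_sum, star_smul, star_pow, RCLike.star_def, starRingEnd_self_apply]
  have hBx : B *ᵥ x = ∑ j : Fin (p + 1), α ^ (j : ℕ) • (B *ᵥ q j) := by
    rw [hx, ← B.mulVecLin_apply, map_sum]
    simp [mulVecLin_apply]
  have hAx : A *ᵥ x = ∑ j : Fin (p + 1), α ^ (j : ℕ) • (A *ᵥ q j) := by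
    rw [hx, ← A.mulVecLin_apply, map_sum]
    simp [mulVecLin_apply]
  constructor
  · rw [hsy, hBx, stmt4_sum_dotProduct]
    refine Finset.sum_eq_zero fun i _ => ?_
    simp only [smul_dotProduct]
    rw [show star (w i) ⬝ᵥ ∑ j : Fin (p + 1), α ^ (j : ℕ) • B *ᵥ q j
        = ∑ j : Fin (p + 1), star (w i) ⬝ᵥ (α ^ (j : ℕ) • B *ᵥ q j) from by
      simp only [dotProduct, Finset.sum_apply, Finset.mul_sum]; exact Finset.sum_comm]
    rw [Finset.sum_eq_zero fun j _ => by rw [dotProduct_smul, keyB j i, smul_zero]]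
    simp
  · rw [hsy, hAx, stmt4_sum_dotProduct]
    refine Finset.sum_eq_zero fun i _ => ?_
    simp only [smul_dotProduct]
    rw [show star (w i) ⬝ᵥ ∑ j : Fin (p + 1), α ^ (j : ℕ) • A *ᵥ q j
        = ∑ j : Fin (p + 1), star (w i) ⬝ᵥ (α ^ (j : ℕ) • A *ᵥ q j) from by
      simp only [dotProduct, Finset.sum_apply, Finset.mul_sum]; exact Finset.sum_comm]
    rw [Finset.sum_eq_zero fun j _ => by rw [dotProduct_smul, keyA j i, smul_zero]]
    simp
end

section
/- Given chains of vectors q₁,…,q_{p+1} ∈ ℂⁿ with A q₁ = 0, A q_{j+1} = B q_j for j = 1,…,p, B q_{p+1} = 0, and w₁,…,w_{r+1} ∈ ℂⁿ with A* w₁ = 0, A* w_{i+1} = B* w_i for i = 1,…,r, B* w_{r+1} = 0, one has w_i* B q_j = 0 for all i = 1,…,r+1 and j = 1,…,p+1. -/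
open Matrix

/-- The key inductive computation: wᵢ* B qⱼ = 0 for all chain members. -/
theorem stmt5 {n p r : ℕ} (A B : Matrix (Fin n) (Fin n) ℂ)
    (q : Fin (p + 1) → Fin n → ℂ) (w : Fin (r + 1) → Fin n → ℂ)
    (hq0 : A *ᵥ q 0 = 0)
    (hqc : ∀ j : Fin p, A *ᵥ q j.succ = B *ᵥ q j.castSucc)
    (hqlast : B *ᵥ q (Fin.last p) = 0)
    (hw0 : Aᴴ *ᵥ w 0 = 0)
    (hwc : ∀ i : Fin r, Aᴴ *ᵥ w i.succ = Bᴴ *ᵥ w i.castSucc)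
    (hwlast : Bᴴ *ᵥ w (Fin.last r) = 0) :
    ∀ (i : Fin (r + 1)) (j : Fin (p + 1)), star (w i) ⬝ᵥ (B *ᵥ q j) = 0 := by
  have key : ∀ (M : Matrix (Fin n) (Fin n) ℂ) (u x : Fin n → ℂ),
      star u ⬝ᵥ (M *ᵥ x) = star (Mᴴ *ᵥ u) ⬝ᵥ x := by
    intro M u x
    rw [star_mulVec, conjTranspose_conjTranspose, dotProduct_mulVec]
  intro i
  induction i using Fin.induction with
  | zero =>
    intro j
    induction j using Fin.lastCases with
    | last => rw [hqlast]; simp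
    | cast j => rw [← hqc j, key, hw0]; simp
  | succ i ih =>
    intro j
    induction j using Fin.lastCases with
    | last => rw [hqlast]; simp
    | cast j => rw [← hqc j, key, hwc i, ← key, ih j.succ]
end

section
/- Let L_{n_i}(λ)ᵀ be the (n_i+1)×n_i pencil G_{n_i} - λH_{n_i} with G = [0; I_{n_i}] and H = [I_{n_i}; 0], and let L_{m_i}(λ) be the m_i×(m_i+1) pencil [0 I_{m_i}] - λ[I_{m_i} 0]. For the square block S_i(λ) = diag(L_{n_i}(λ)ᵀ, L_{m_i}(λ)) of size (n_i+m_i+1)×(n_i+m_i+1) and the rank-one perturbation F_i = (α_i - λ₀β_i) e e*, where e is the (n_i+1)-st standard basis vector of ℂ^{n_i+m_i+1}, one has det(S_i(λ₀) + F_i) = (-λ₀)^{n_i} (α_i - λ₀β_i). -/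
open Matrix

/-- Determinant of S_i(λ₀) + F_i where S_i(λ) = diag(L_{n}(λ)ᵀ, L_{m}(λ)) and
F_i = (α - λ₀β) e e* with e the (n+1)-st standard basis vector:
det = (-λ₀)ⁿ (α - λ₀β). -/
theorem stmt9 (n m : ℕ) (lam0 α β : ℂ)
    (M : Matrix (Fin (n + m + 1)) (Fin (n + m + 1)) ℂ)
    (hM : ∀ i j : Fin (n + m + 1), M i j =
      (if (i : ℕ) ≤ n ∧ (j : ℕ) < n then
        ((if (i : ℕ) = (j : ℕ) + 1 then (1 : ℂ) else 0)
          - lam0 * (if (i : ℕ) = (j : ℕ) then 1 else 0)) else 0)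
      + (if n < (i : ℕ) ∧ n ≤ (j : ℕ) then
        ((if (j : ℕ) = (i : ℕ) then (1 : ℂ) else 0)
          - lam0 * (if (j : ℕ) + 1 = (i : ℕ) then 1 else 0)) else 0)
      + (if (i : ℕ) = n ∧ (j : ℕ) = n then (α - lam0 * β) else 0)) :
    M.det = (-lam0) ^ n * (α - lam0 * β) := by
  have htri : ∀ i j : Fin (n + m + 1), i < j → M i j = 0 := by
    intro i j hij
    have h : (i : ℕ) < (j : ℕ) := hij
    rw [hM]
    split_ifs <;> first | omega | ring
  rw [Matrix.det_of_lowerTriangular M htri]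
  have hdiag : ∀ i : Fin (n + m + 1), M i i =
      if (i : ℕ) < n then -lam0 else if (i : ℕ) = n then α - lam0 * β else 1 := by
    intro i
    rw [hM]
    split_ifs <;> first | omega | ring
  calc ∏ i : Fin (n + m + 1), M i i
      = ∏ i : Fin (n + m + 1),
        (if (i : ℕ) < n then -lam0 else if (i : ℕ) = n then α - lam0 * β else 1) :=
        Finset.prod_congr rfl (fun i _ => hdiag i)
    _ = ∏ k ∈ Finset.range (n + m + 1),
        (if k < n then -lam0 else if k = n then α - lam0 * β else 1) := by
        exact Fin.prod_univ_eq_prod_range (fun k => if k < n then -lam0 else if k = n then α - lam0 * β else 1) (n + m + 1)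
    _ = (-lam0) ^ n * (α - lam0 * β) := by
        have h : n + m + 1 = n + (m + 1) := by omega
        rw [h, Finset.prod_range_add, Finset.prod_range_succ']
        have h1 : (∏ x ∈ Finset.range n,
            if x < n then -lam0 else if x = n then α - lam0 * β else 1) = (-lam0) ^ n := by
          rw [Finset.prod_congr rfl (fun x hx => if_pos (Finset.mem_range.mp hx)),
            Finset.prod_const, Finset.card_range]
        have h2 : ∀ x ∈ Finset.range m,
            (if n + (x + 1) < n then -lam0 else if n + (x + 1) = n then α - lam0 * β
              else (1 : ℂ)) = 1 := by
          intro x hx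
          rw [if_neg (by omega), if_neg (by omega)]
        rw [h1, Finset.prod_congr rfl h2, Finset.prod_const_one, one_mul,
          if_neg (by omega), if_pos (by omega)]
end
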